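/- arXiv:2404.06736 — 8 statements merged into one kernel-verified Lean document; each statement's English description precedes it below -/
import Mathlib

section
/- For all x in [0,1] and any positive integer k, the k-fold composition of L_0 with itself equals sqrt(1 - (1 - x^2)^(2^k)), where L_0(x) = x*sqrt(2 - x^2). -/
noncomputable def L0 (x : ℝ) : ℝ := x * Real.sqrt (2 - x ^ 2)

lemma L0_eq (x : ℝ) (hx : x ∈ Set.Icc (0:ℝ) 1) :
    L0 x = Real.sqrt (1 - (1 - x ^ 2) ^ 2) := by
  obtain ⟨h0, h1⟩ := hx
  have h2 : (0:ℝ) ≤ 2 - x ^ 2 := by nlinarith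
  have : L0 x = Real.sqrt (x ^ 2 * (2 - x ^ 2)) := by
    rw [Real.sqrt_mul (by positivity), Real.sqrt_sq h0, L0]
  rw [this]; ring_nf

lemma L0_mem (x : ℝ) (hx : x ∈ Set.Icc (0:ℝ) 1) : L0 x ∈ Set.Icc (0:ℝ) 1 := by
  obtain ⟨h0, h1⟩ := hx
  rw [L0_eq x ⟨h0, h1⟩]
  constructor
  · positivity
  · have h : (1 - (1 - x ^ 2) ^ 2) ≤ 1 := by nlinarith
    calc Real.sqrt (1 - (1 - x ^ 2) ^ 2) ≤ Real.sqrt 1 := Real.sqrt_le_sqrt h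
      _ = 1 := Real.sqrt_one

lemma L0_sq (x : ℝ) (hx : x ∈ Set.Icc (0:ℝ) 1) :
    1 - (L0 x) ^ 2 = (1 - x ^ 2) ^ 2 := by
  obtain ⟨h0, h1⟩ := hx
  rw [L0_eq x ⟨h0, h1⟩, Real.sq_sqrt (by nlinarith [mul_nonneg (sq_nonneg x) (show (0:ℝ) ≤ 2 - x^2 by nlinarith)])]
  ring

theorem L0_iterate (k : ℕ) (hk : 0 < k) (x : ℝ) (hx : x ∈ Set.Icc (0:ℝ) 1) :
    L0^[k] x = Real.sqrt (1 - (1 - x ^ 2) ^ (2 ^ k)) := by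
  induction k generalizing x with
  | zero => exact absurd hk (by simp)
  | succ k ih =>
    rcases Nat.eq_zero_or_pos k with rfl | hk'
    · simpa using L0_eq x hx
    · rw [Function.iterate_succ_apply, ih hk' (L0 x) (L0_mem x hx)]
      congr 1
      have : (1 - (L0 x) ^ 2) = (1 - x ^ 2) ^ 2 := L0_sq x hx
      rw [show (1:ℝ) - (1 - L0 x ^ 2) ^ 2 ^ k = 1 - ((1 - x^2)^2) ^ 2^k by rw [this],
        ← pow_mul, ← pow_succ']
end

section
/- For positive integers m, n: if (1 - 1/2^(2^m))^(2^n) ≤ 1/2, then for all x in [0,1], 1 - (1 - x^(2^m))^(2^n) ≥ (1 - (1-x)^(2^m))^(2^n); that is, Z_{1^m 0^n}(x) ≥ Z_{0^m 1^n}(x) on [0,1]. -/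
/-!
Write `a = 2 ^ m` and `N = 2 ^ a`. Strict Bernoulli turns the hypothesis into `a ≤ n`, and both
sides are monotone in the outer exponent, so it suffices to show
`(1 - (1 - x) ^ a) ^ N + (1 - x ^ a) ^ N ≤ 1`, which is symmetric under `x ↦ 1 - x`; take
`x ≤ 1 / 2`. For `a² x ≤ 1`, Bernoulli gives `(1 - (1 - x) ^ a) ^ N ≤ (a x) ^ N ≤ x ^ a`.
Otherwise let `s = 2 x`, so that `N x ^ a = s ^ a` and `N (1 - x) ^ a = (2 - s) ^ a`. The bounds
`(1 - q) ^ N ≤ exp (-N q)` and `(1 - p) ^ N (1 + N p) ≤ 1` reduce the claim to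
`1 + s⁻¹ ^ a ≤ exp ((2 - s) ^ a)`. For `s ≥ 1 / 2` this follows from Taylor polynomials of `exp`;
for smaller `s` both sides decrease in `s`, so on each of a few intervals it suffices to compare
the left side at the left endpoint with the right side at the right endpoint.
-/

open Real Set

lemma le_of_one_sub_inv_two_pow_pow_le_half {a n : ℕ} (hn : 0 < n)
    (h : ((1 : ℝ) - 1 / 2 ^ a) ^ (2 ^ n) ≤ 1 / 2) : a ≤ n := by
  by_contra! hna
  set ε : ℝ := 1 / 2 ^ a
  have hε : 0 < ε := by positivity
  have hsmall : (2 : ℝ) ^ n * ε ≤ 1 / 2 := by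
    rw [mul_one_div, div_le_div_iff₀ (by positivity) (by norm_num), ← pow_succ, one_mul]
    exact pow_le_pow_right₀ (by norm_num) hna
  have hbernoulli : 1 + ((2 ^ n : ℕ) : ℝ) * -ε < (1 + -ε) ^ ((2 ^ n : ℕ) : ℝ) :=
    one_add_mul_self_lt_rpow_one_add
      (by linarith [le_mul_of_one_le_left hε.le (one_le_pow₀ (one_le_two (α := ℝ)) (n := n))])
      (neg_ne_zero.2 hε.ne') (by exact_mod_cast Nat.one_lt_two_pow hn.ne')
  rw [rpow_natCast, ← sub_eq_add_neg] at hbernoulli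
  push_cast at hbernoulli
  linarith

lemma one_sub_pow_mem_Icc {x : ℝ} (hx : x ∈ Icc (0 : ℝ) 1) (a : ℕ) : 1 - x ^ a ∈ Icc (0 : ℝ) 1 :=
  ⟨sub_nonneg.2 (pow_le_one₀ hx.1 hx.2), sub_le_self _ (pow_nonneg hx.1 a)⟩

lemma one_sub_pow_pow_add_le_of_le {a N M : ℕ} {x : ℝ} (hx : x ∈ Icc (0 : ℝ) 1) (hNM : N ≤ M) :
    (1 - (1 - x) ^ a) ^ M + (1 - x ^ a) ^ M ≤ (1 - (1 - x) ^ a) ^ N + (1 - x ^ a) ^ N := by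
  obtain ⟨hu0, hu1⟩ := one_sub_pow_mem_Icc (sub_mem_Icc_zero_iff_right.2 hx) a
  obtain ⟨hv0, hv1⟩ := one_sub_pow_mem_Icc hx a
  exact add_le_add (pow_le_pow_of_le_one hu0 hu1 hNM) (pow_le_pow_of_le_one hv0 hv1 hNM)

lemma one_sub_pow_pow_add_le_one_of_sq_mul_le_one {a N : ℕ} {x : ℝ} (ha : 1 ≤ a)
    (hN : 2 * a ≤ N) (hx0 : 0 ≤ x) (hx : (a : ℝ) ^ 2 * x ≤ 1) :
    (1 - (1 - x) ^ a) ^ N + (1 - x ^ a) ^ N ≤ 1 := by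
  have haR : (1 : ℝ) ≤ a := by exact_mod_cast ha
  have hax : a * x ≤ 1 := by nlinarith
  have hx1 : x ≤ 1 := by nlinarith
  have hu : 1 - (1 - x) ^ a ≤ a * x := by
    have := one_add_mul_le_pow (by linarith : (-2 : ℝ) ≤ -x) a
    rw [← sub_eq_add_neg] at this
    linarith
  have hu0 : 0 ≤ 1 - (1 - x) ^ a :=
    (one_sub_pow_mem_Icc (sub_mem_Icc_zero_iff_right.2 ⟨hx0, hx1⟩) a).1
  have hv := one_sub_pow_mem_Icc ⟨hx0, hx1⟩ a
  have hfirst : (1 - (1 - x) ^ a) ^ N ≤ x ^ a :=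
    calc (1 - (1 - x) ^ a) ^ N ≤ (a * x) ^ N := pow_le_pow_left₀ hu0 hu N
      _ ≤ (a * x) ^ (2 * a) := pow_le_pow_of_le_one (by positivity) hax hN
      _ = ((a : ℝ) ^ 2 * x * x) ^ a := by rw [pow_mul]; ring
      _ ≤ x ^ a := pow_le_pow_left₀ (by positivity) (by nlinarith) a
  have hsecond : (1 - x ^ a) ^ N ≤ 1 - x ^ a := pow_le_of_le_one hv.1 hv.2 (by omega)
  linarith

lemma one_sub_pow_mul_one_add_mul_le_one {p : ℝ} (hp0 : 0 ≤ p) (hp1 : p ≤ 1) (N : ℕ) :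
    (1 - p) ^ N * (1 + N * p) ≤ 1 :=
  calc (1 - p) ^ N * (1 + N * p) ≤ (1 - p) ^ N * (1 + p) ^ N :=
        mul_le_mul_of_nonneg_left (one_add_mul_le_pow (by linarith) N) (pow_nonneg (by linarith) N)
    _ = (1 - p ^ 2) ^ N := by rw [← mul_pow]; ring
    _ ≤ 1 := pow_le_one₀ (by nlinarith) (by nlinarith)

lemma one_sub_pow_pow_add_le_one_of_le_exp {a : ℕ} {x : ℝ} (hx0 : 0 < x) (hx1 : x ≤ 1)
    (hkey : 1 + (2 * x)⁻¹ ^ a ≤ exp ((2 - 2 * x) ^ a)) :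
    (1 - (1 - x) ^ a) ^ 2 ^ a + (1 - x ^ a) ^ 2 ^ a ≤ 1 := by
  set N := 2 ^ a
  set A := (2 * x) ^ a
  have hA : 0 < A := by positivity
  have hNp : (N : ℝ) * x ^ a = A := by simp [N, A, mul_pow]
  have hNq : (N : ℝ) * (1 - x) ^ a = (2 - 2 * x) ^ a := by
    simp only [N]; push_cast; rw [← mul_pow]; ring
  have hq : (1 - (1 - x) ^ a) ^ N ≤ exp (-(2 - 2 * x) ^ a) := by
    have := one_sub_div_pow_le_exp_neg (n := N) (t := N * (1 - x) ^ a)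
      (mul_le_of_le_one_right (by positivity) (pow_le_one₀ (by linarith) (by linarith)))
    rwa [mul_div_cancel_left₀ _ (by positivity), hNq] at this
  have hq' : (1 - (1 - x) ^ a) ^ N * (A + 1) ≤ A := by
    rw [inv_pow] at hkey
    have h : (1 - (1 - x) ^ a) ^ N * (1 + A⁻¹) ≤ 1 :=
      calc (1 - (1 - x) ^ a) ^ N * (1 + A⁻¹)
          ≤ exp (-(2 - 2 * x) ^ a) * exp ((2 - 2 * x) ^ a) :=
            mul_le_mul hq hkey (by positivity) (exp_pos _).le
        _ = 1 := by rw [← exp_add, neg_add_cancel, exp_zero]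
    calc (1 - (1 - x) ^ a) ^ N * (A + 1) = (1 - (1 - x) ^ a) ^ N * (1 + A⁻¹) * A := by
          field_simp
      _ ≤ A := mul_le_of_le_one_left hA.le h
  have hp : (1 - x ^ a) ^ N * (1 + A) ≤ 1 := by
    rw [← hNp]; exact one_sub_pow_mul_one_add_mul_le_one (by positivity) (pow_le_one₀ hx0.le hx1) N
  have hsum : ((1 - (1 - x) ^ a) ^ N + (1 - x ^ a) ^ N) * (1 + A) ≤ 1 * (1 + A) := by
    linarith
  exact le_of_mul_le_mul_right hsum (by positivity)

lemma one_add_inv_pow_le_exp_of_one_le_mul {a : ℕ} {s : ℝ} (hs : 0 < s)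
    (h : 1 ≤ s ^ a * (exp ((2 - s) ^ a) - 1)) : 1 + s⁻¹ ^ a ≤ exp ((2 - s) ^ a) := by
  rw [inv_pow, add_comm, ← le_sub_iff_add_le, inv_le_iff_one_le_mul₀' (by positivity)]
  exact h

lemma one_add_inv_pow_le_exp_of_seven_tenths_le {a : ℕ} {s : ℝ} (hs : 7 / 10 ≤ s)
    (hs1 : s ≤ 1) : 1 + s⁻¹ ^ a ≤ exp ((2 - s) ^ a) := by
  refine one_add_inv_pow_le_exp_of_one_le_mul (by linarith) ?_
  set Y := (2 - s) ^ a
  have hexp : Y + Y ^ 2 / 2 ≤ exp Y - 1 := by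
    linarith [quadratic_le_exp_of_nonneg (pow_nonneg (by linarith : (0 : ℝ) ≤ 2 - s) a)]
  have hr1 : 1 - a * (1 - s) ^ 2 ≤ (s * (2 - s)) ^ a := by
    have := one_add_mul_le_pow (by nlinarith : (-2 : ℝ) ≤ -(1 - s) ^ 2) a
    rw [show 1 + -(1 - s) ^ 2 = s * (2 - s) by ring] at this
    linarith
  have hr2 : 1 + a * (s * (2 - s) ^ 2 - 1) ≤ (s * (2 - s) ^ 2) ^ a := by
    have := one_add_mul_le_pow (by nlinarith : (-2 : ℝ) ≤ s * (2 - s) ^ 2 - 1) a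
    rwa [add_sub_cancel] at this
  -- with `t = 1 - s` this reads `t - t² - t³ ≥ 2 t²`, which holds as `t ≤ 3 / 10`
  have hr : 2 * (1 - s) ^ 2 ≤ s * (2 - s) ^ 2 - 1 := by nlinarith
  have ha : (0 : ℝ) ≤ a := a.cast_nonneg
  calc 1 ≤ (s * (2 - s)) ^ a + (s * (2 - s) ^ 2) ^ a / 2 := by nlinarith
    _ = s ^ a * (Y + Y ^ 2 / 2) := by simp only [Y, mul_pow, ← pow_mul]; ring
    _ ≤ s ^ a * (exp Y - 1) := mul_le_mul_of_nonneg_left hexp (pow_nonneg (by linarith) a)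

lemma one_add_inv_pow_le_exp_of_half_le {a : ℕ} {s : ℝ} (ha : 2 ≤ a) (hs : 1 / 2 ≤ s)
    (hs1 : s ≤ 7 / 10) : 1 + s⁻¹ ^ a ≤ exp ((2 - s) ^ a) := by
  refine one_add_inv_pow_le_exp_of_one_le_mul (by linarith) ?_
  set Y := (2 - s) ^ a
  have hY : 0 ≤ Y := pow_nonneg (by linarith) a
  have hexp : Y ^ 2 / 2 + Y ^ 3 / 6 ≤ exp Y - 1 := by
    have : 1 + Y + Y ^ 2 / 2 + Y ^ 3 / 6 ≤ exp Y := by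
      simpa [Finset.sum_range_succ, Nat.factorial] using sum_le_exp_of_nonneg hY 4
    linarith
  have hs' := mul_nonneg (sub_nonneg.2 hs) (sub_nonneg.2 hs1)
  have hr2 : (9 / 8 : ℝ) ^ a ≤ (s * (2 - s) ^ 2) ^ a :=
    pow_le_pow_left₀ (by norm_num) (by nlinarith) a
  have hr3 : (3 / 2 : ℝ) ^ a ≤ (s * (2 - s) ^ 3) ^ a :=
    pow_le_pow_left₀ (by norm_num) (by nlinarith) a
  have h98 : (9 / 8 : ℝ) ^ 2 ≤ (9 / 8) ^ a := pow_le_pow_right₀ (by norm_num) ha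
  have h32 : (3 / 2 : ℝ) ^ 2 ≤ (3 / 2) ^ a := pow_le_pow_right₀ (by norm_num) ha
  calc 1 ≤ (9 / 8 : ℝ) ^ 2 / 2 + (3 / 2) ^ 2 / 6 := by norm_num
    _ ≤ (s * (2 - s) ^ 2) ^ a / 2 + (s * (2 - s) ^ 3) ^ a / 6 := by linarith
    _ = s ^ a * (Y ^ 2 / 2 + Y ^ 3 / 6) := by simp only [Y, mul_pow, ← pow_mul]; ring
    _ ≤ s ^ a * (exp Y - 1) := mul_le_mul_of_nonneg_left hexp (pow_nonneg (by linarith) a)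

lemma one_add_inv_pow_le_exp_of_mem_Icc {a : ℕ} {c d s : ℝ} (hc : 0 < c) (hcs : c ≤ s)
    (hsd : s ≤ d) (hd : d ≤ 2) (h : 1 + c⁻¹ ^ a ≤ exp ((2 - d) ^ a)) :
    1 + s⁻¹ ^ a ≤ exp ((2 - s) ^ a) := by
  have hinv : s⁻¹ ^ a ≤ c⁻¹ ^ a :=
    pow_le_pow_left₀ (inv_nonneg.2 (hc.trans_le hcs).le) (inv_anti₀ hc hcs) a
  have hY : (2 - d) ^ a ≤ (2 - s) ^ a := pow_le_pow_left₀ (by linarith) (by linarith) a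
  linarith [exp_le_exp.2 hY]

lemma le_exp_of_le_pow {b y : ℝ} (k : ℕ) (hb : b ≤ (27 / 10) ^ k) (hk : k ≤ y) : b ≤ exp y :=
  calc b ≤ (27 / 10) ^ k := hb
    _ ≤ exp 1 ^ k := pow_le_pow_left₀ (by norm_num) (by linarith [exp_one_gt_d9]) k
    _ = exp k := by rw [← exp_nat_mul, mul_one]
    _ ≤ exp y := exp_le_exp.2 hk

lemma one_add_inv_pow_four_le_exp {s : ℝ} (hs : 1 / 8 ≤ s) (hs1 : s ≤ 1 / 2) :
    1 + s⁻¹ ^ 4 ≤ exp ((2 - s) ^ 4) := by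
  rcases le_or_gt s (1 / 4) with h₁ | h₁
  · exact one_add_inv_pow_le_exp_of_mem_Icc (d := 1 / 4) (by norm_num) hs h₁ (by norm_num)
      (le_exp_of_le_pow 9 (by norm_num) (by norm_num))
  rcases le_or_gt s (3 / 8) with h₂ | h₂
  · exact one_add_inv_pow_le_exp_of_mem_Icc (d := 3 / 8) (by norm_num) h₁.le h₂ (by norm_num)
      (le_exp_of_le_pow 6 (by norm_num) (by norm_num))
  · exact one_add_inv_pow_le_exp_of_mem_Icc (d := 1 / 2) (by norm_num) h₂.le hs1 (by norm_num)
      (le_exp_of_le_pow 5 (by norm_num) (by norm_num))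

lemma two_mul_add_one_le_three_halves_pow {a : ℕ} (ha : 7 ≤ a) :
    (2 * a + 1 : ℝ) ≤ (3 / 2) ^ a := by
  induction a, ha using Nat.le_induction with
  | base => norm_num
  | succ k hk ih =>
    have : (7 : ℝ) ≤ k := by exact_mod_cast hk
    rw [pow_succ (3 / 2 : ℝ)]; push_cast; nlinarith

lemma sq_add_one_le_seven_fourths_pow {a : ℕ} (ha : 8 ≤ a) :
    (a : ℝ) ^ 2 + 1 ≤ (7 / 4) ^ a := by
  induction a, ha using Nat.le_induction with
  | base => norm_num
  | succ k hk ih =>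
    have : (8 : ℝ) ≤ k := by exact_mod_cast hk
    rw [pow_succ (7 / 4 : ℝ)]; push_cast; nlinarith

lemma one_add_inv_pow_le_exp_of_quarter_le {a : ℕ} {s : ℝ} (ha : 8 ≤ a) (hs : 1 / 4 ≤ s)
    (hs1 : s ≤ 1 / 2) : 1 + s⁻¹ ^ a ≤ exp ((2 - s) ^ a) := by
  refine one_add_inv_pow_le_exp_of_mem_Icc (by norm_num) hs hs1 (by norm_num)
    (le_exp_of_le_pow (2 * a + 1) ?_ ?_)
  · have h4 : (4 : ℝ) ^ a ≤ ((27 / 10) ^ 2) ^ a := pow_le_pow_left₀ (by norm_num) (by norm_num) a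
    have h1 : (1 : ℝ) ≤ 4 ^ a := one_le_pow₀ (by norm_num)
    rw [pow_succ, pow_mul]
    norm_num at h4 ⊢
    linarith
  · push_cast
    norm_num
    exact two_mul_add_one_le_three_halves_pow (by omega)

lemma one_add_inv_pow_le_exp_of_two_le_sq_mul {a : ℕ} {s : ℝ} (ha : 8 ≤ a)
    (hs : 2 ≤ (a : ℝ) ^ 2 * s) (hs1 : s ≤ 1 / 4) : 1 + s⁻¹ ^ a ≤ exp ((2 - s) ^ a) := by
  have hgrowth := sq_add_one_le_seven_fourths_pow ha
  refine one_add_inv_pow_le_exp_of_mem_Icc (c := 2 / (a : ℝ) ^ 2) (by positivity)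
    (by rwa [div_le_iff₀' (by positivity)]) hs1 (by norm_num)
    (le_exp_of_le_pow (a ^ 2 + 1) ?_ ?_)
  · have hbase : (2 / (a : ℝ) ^ 2)⁻¹ ≤ (27 / 10) ^ a := by
      rw [inv_div]
      calc (a : ℝ) ^ 2 / 2 ≤ (7 / 4) ^ a := by nlinarith
        _ ≤ (27 / 10) ^ a := pow_le_pow_left₀ (by norm_num) (by norm_num) a
    have hpow : (2 / (a : ℝ) ^ 2)⁻¹ ^ a ≤ (27 / 10) ^ (a ^ 2) :=
      calc (2 / (a : ℝ) ^ 2)⁻¹ ^ a ≤ ((27 / 10) ^ a) ^ a :=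
            pow_le_pow_left₀ (by positivity) hbase a
        _ = (27 / 10) ^ (a ^ 2) := by rw [← pow_mul, sq]
    have h1 : (1 : ℝ) ≤ (27 / 10) ^ (a ^ 2) := one_le_pow₀ (by norm_num)
    rw [pow_succ (27 / 10 : ℝ)]
    linarith
  · push_cast
    norm_num
    exact hgrowth

lemma one_add_inv_pow_two_pow_le_exp {m : ℕ} {s : ℝ} (hm : 0 < m)
    (hs : 2 ≤ (2 ^ m : ℝ) ^ 2 * s) (hs1 : s ≤ 1) : 1 + s⁻¹ ^ 2 ^ m ≤ exp ((2 - s) ^ 2 ^ m) := by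
  rcases le_or_gt (7 / 10) s with h₁ | h₁
  · exact one_add_inv_pow_le_exp_of_seven_tenths_le h₁ hs1
  rcases le_or_gt (1 / 2) s with h₂ | h₂
  · exact one_add_inv_pow_le_exp_of_half_le (Nat.one_lt_two_pow hm.ne') h₂ h₁.le
  have hm2 : 2 ≤ m := by
    by_contra!
    obtain rfl : m = 1 := by omega
    norm_num at hs
    linarith
  rcases hm2.eq_or_lt with rfl | hm3
  · norm_num at hs
    exact one_add_inv_pow_four_le_exp (by linarith) h₂.le
  have ha : 8 ≤ 2 ^ m := by
    calc 8 = 2 ^ 3 := rfl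
      _ ≤ 2 ^ m := Nat.pow_le_pow_right two_pos hm3
  rcases le_or_gt (1 / 4) s with h₃ | h₃
  · exact one_add_inv_pow_le_exp_of_quarter_le ha h₃ h₂.le
  · exact one_add_inv_pow_le_exp_of_two_le_sq_mul ha (by exact_mod_cast hs) h₃.le

lemma one_sub_pow_pow_add_le_one_of_le_half {m : ℕ} {x : ℝ} (hm : 0 < m) (hx0 : 0 ≤ x)
    (hx : x ≤ 1 / 2) : (1 - (1 - x) ^ 2 ^ m) ^ 2 ^ 2 ^ m + (1 - x ^ 2 ^ m) ^ 2 ^ 2 ^ m ≤ 1 := by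
  rcases le_or_gt (((2 ^ m : ℕ) : ℝ) ^ 2 * x) 1 with hA | hA
  · refine one_sub_pow_pow_add_le_one_of_sq_mul_le_one Nat.one_le_two_pow ?_ hx0 hA
    rw [← pow_succ']
    exact Nat.pow_le_pow_right two_pos (Nat.lt_two_pow_self)
  · have hx0' : 0 < x := pos_of_mul_pos_right (one_pos.trans hA) (by positivity)
    refine one_sub_pow_pow_add_le_one_of_le_exp hx0' (by linarith) ?_
    refine one_add_inv_pow_two_pow_le_exp hm ?_ (by linarith)
    push_cast at hA
    linarith

lemma one_sub_pow_pow_add_le_one {m : ℕ} {x : ℝ} (hm : 0 < m) (hx : x ∈ Icc (0 : ℝ) 1) :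
    (1 - (1 - x) ^ 2 ^ m) ^ 2 ^ 2 ^ m + (1 - x ^ 2 ^ m) ^ 2 ^ 2 ^ m ≤ 1 := by
  rcases le_or_gt x (1 / 2) with h | h
  · exact one_sub_pow_pow_add_le_one_of_le_half hm hx.1 h
  · have := one_sub_pow_pow_add_le_one_of_le_half hm (x := 1 - x) (by linarith [hx.2])
      (by linarith)
    rw [sub_sub_cancel] at this
    linarith

theorem Z_1m0n_ge_Z_0m1n (m n : ℕ) (hm : 0 < m) (hn : 0 < n)
    (h : ((1 : ℝ) - 1 / 2 ^ (2 ^ m)) ^ (2 ^ n) ≤ 1 / 2) :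
    ∀ x ∈ Set.Icc (0:ℝ) 1,
      ((1 - (1 - x) ^ (2 ^ m)) ^ (2 ^ n) : ℝ) ≤ 1 - (1 - x ^ (2 ^ m)) ^ (2 ^ n) := by
  intro x hx
  have hmn : 2 ^ m ≤ n := le_of_one_sub_inv_two_pow_pow_le_half hn h
  have hexponent := one_sub_pow_pow_add_le_of_le (a := 2 ^ m) hx
    (Nat.pow_le_pow_right two_pos hmn)
  linarith [one_sub_pow_pow_add_le_one hm hx]
end

section
/- For any natural number k and all x in [0,1], Z_{010^k10}(x) ≥ Z_{100^k01}(x), where Z_{010^k10} = Z_0 ∘ Z_1 ∘ Z_0^{∘k} ∘ Z_1 ∘ Z_0 (apply Z_0, then Z_1, then Z_0 k times, then Z_1, then Z_0) and Z_{100^k01} = Z_1 ∘ Z_0 ∘ Z_0^{∘k} ∘ Z_0 ∘ Z_1 (apply Z_1, then Z_0, then Z_0 k times, then Z_0, then Z_1). -/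
set_option maxHeartbeats 1000000

noncomputable def Z0 (x : ℝ) : ℝ := 1 - (1 - x) ^ 2
noncomputable def Z1 (x : ℝ) : ℝ := x ^ 2

noncomputable def Zb : Bool → ℝ → ℝ
  | false => Z0
  | true => Z1

/-- `Zpath α x` applies `Z_{α_1}` first, then `Z_{α_2}`, etc. -/
noncomputable def Zpath (α : List Bool) (x : ℝ) : ℝ := α.foldl (fun y b => Zb b y) x

private lemma step_lemma (p q : ℝ) (hp0 : 0 ≤ p) (hq0 : 0 ≤ q) (hq1 : q ≤ 1)
    (h : p ^ 2 ≤ q ^ 2 * (2 - q ^ 2)) :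
    (p * (2 - p)) ^ 2 ≤ (q * (2 - q)) ^ 2 * (2 - (q * (2 - q)) ^ 2) := by
  have h1q : (0:ℝ) ≤ 1 - q := by linarith
  set σ : ℝ := q ^ 2 * (2 - q ^ 2) with hσ
  set R : ℝ := (q * (2 - q)) ^ 2 * (2 - (q * (2 - q)) ^ 2) with hR
  have hσ0 : 0 ≤ σ := by
    rw [hσ]
    have : (0:ℝ) ≤ 2 - q^2 := by nlinarith
    exact mul_nonneg (sq_nonneg q) this
  have hσ1 : σ ≤ 1 := by rw [hσ]; nlinarith [sq_nonneg (1 - q^2)]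
  set s : ℝ := Real.sqrt σ with hsdef
  have hs0 : 0 ≤ s := Real.sqrt_nonneg σ
  have hs2 : s ^ 2 = σ := Real.sq_sqrt hσ0
  have hs1 : s ≤ 1 := by
    apply le_of_pow_le_pow_left₀ (n := 2) (by norm_num) (by norm_num)
    rw [hs2]; simpa using hσ1
  have hps : p ≤ s := by
    apply le_of_pow_le_pow_left₀ (n := 2) (by norm_num) hs0
    rw [hs2]; exact h
  have hmono : p * (2 - p) ≤ s * (2 - s) := by
    nlinarith [mul_nonneg (sub_nonneg.2 hps) (show (0:ℝ) ≤ 2 - s - p by linarith)]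
  have hpp0 : 0 ≤ p * (2 - p) := mul_nonneg hp0 (by linarith [hps, hs1])
  have h2 : (p * (2 - p)) ^ 2 ≤ (s * (2 - s)) ^ 2 := pow_le_pow_left₀ hpp0 hmono 2
  -- e := 4σ + σ² - R ≥ 0
  have he_id : 4 * σ + σ ^ 2 - R =
      8 * (q^3 * (1-q)^5) + 54 * (q^4 * (1-q)^4) + 104 * (q^5 * (1-q)^3)
        + 88 * (q^6 * (1-q)^2) + 32 * (q^7 * (1-q)) + 4 * q^8 := by
    rw [hR, hσ]; ring
  have t1 : 0 ≤ q^3 * (1-q)^5 := mul_nonneg (pow_nonneg hq0 3) (pow_nonneg h1q 5)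
  have t2 : 0 ≤ q^4 * (1-q)^4 := mul_nonneg (pow_nonneg hq0 4) (pow_nonneg h1q 4)
  have t3 : 0 ≤ q^5 * (1-q)^3 := mul_nonneg (pow_nonneg hq0 5) (pow_nonneg h1q 3)
  have t4 : 0 ≤ q^6 * (1-q)^2 := mul_nonneg (pow_nonneg hq0 6) (pow_nonneg h1q 2)
  have t5 : 0 ≤ q^7 * (1-q) := mul_nonneg (pow_nonneg hq0 7) h1q
  have t6 : 0 ≤ q^8 := pow_nonneg hq0 8
  have he0 : 0 ≤ 4 * σ + σ ^ 2 - R := by rw [he_id]; linarith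
  -- 16σ³ - e² ≥ 0
  have hbig_id : 16 * σ ^ 3 - (4 * σ + σ ^ 2 - R) ^ 2 =
      64 * (q^6 * (1-q)^10) + 416 * (q^7 * (1-q)^9) + 988 * (q^8 * (1-q)^8)
        + 1184 * (q^9 * (1-q)^7) + 768 * (q^10 * (1-q)^6) + 256 * (q^11 * (1-q)^5)
        + 32 * (q^12 * (1-q)^4) := by
    rw [hR, hσ]; ring
  have u1 : 0 ≤ q^6 * (1-q)^10 := mul_nonneg (pow_nonneg hq0 6) (pow_nonneg h1q 10)
  have u2 : 0 ≤ q^7 * (1-q)^9 := mul_nonneg (pow_nonneg hq0 7) (pow_nonneg h1q 9)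
  have u3 : 0 ≤ q^8 * (1-q)^8 := mul_nonneg (pow_nonneg hq0 8) (pow_nonneg h1q 8)
  have u4 : 0 ≤ q^9 * (1-q)^7 := mul_nonneg (pow_nonneg hq0 9) (pow_nonneg h1q 7)
  have u5 : 0 ≤ q^10 * (1-q)^6 := mul_nonneg (pow_nonneg hq0 10) (pow_nonneg h1q 6)
  have u6 : 0 ≤ q^11 * (1-q)^5 := mul_nonneg (pow_nonneg hq0 11) (pow_nonneg h1q 5)
  have u7 : 0 ≤ q^12 * (1-q)^4 := mul_nonneg (pow_nonneg hq0 12) (pow_nonneg h1q 4)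
  have hbig : (4 * σ + σ ^ 2 - R) ^ 2 ≤ 16 * σ ^ 3 := by linarith
  -- hence e ≤ 4 s σ
  have hsσ : 0 ≤ 4 * s * σ := by positivity
  have he4 : 4 * σ + σ ^ 2 - R ≤ 4 * s * σ := by
    apply le_of_pow_le_pow_left₀ (n := 2) (by norm_num) hsσ
    have h16 : (4 * s * σ) ^ 2 = 16 * σ ^ 3 := by
      have hh : (4 * s * σ) ^ 2 = 16 * s ^ 2 * σ ^ 2 := by ring
      rw [hh, hs2]; ring
    rw [h16]; exact hbig
  -- (s(2-s))² = 4σ - 4sσ + σ²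
  have hfinal : (s * (2 - s)) ^ 2 ≤ R := by
    have hexp : (s * (2 - s)) ^ 2 = 4 * s ^ 2 - 4 * s * s ^ 2 + (s ^ 2) ^ 2 := by ring
    rw [hexp, hs2]; linarith
  linarith

-- the iterate on replicate false
private lemma zpath_replicate (k : ℕ) (y : ℝ) :
    (List.replicate k false).foldl (fun y b => Zb b y) y = 1 - (1 - y) ^ 2 ^ k := by
  induction k generalizing y with
  | zero => simp
  | succ n ih =>
      rw [List.replicate_succ, List.foldl_cons]
      show (List.replicate n false).foldl (fun y b => Zb b y) (Z0 y) = _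
      rw [ih (Z0 y)]
      have h1 : 1 - Z0 y = (1 - y) ^ 2 := by rw [Z0]; ring
      rw [h1, ← pow_mul]
      have h2 : 2 * 2 ^ n = 2 ^ (n + 1) := (pow_succ' 2 n).symm
      rw [h2]

private lemma main_ineq (k : ℕ) (x : ℝ) (hx0 : 0 ≤ x) (hx1 : x ≤ 1) :
    (1 - (1 - x ^ 2) ^ 2 ^ (k + 2)) ^ 2 ≤
      (1 - (1 - (x * (2 - x)) ^ 2) ^ 2 ^ k) ^ 2
        * (2 - (1 - (1 - (x * (2 - x)) ^ 2) ^ 2 ^ k) ^ 2) := by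
  have hx2a : 0 ≤ 1 - x ^ 2 := by nlinarith
  have hx2b : 1 - x ^ 2 ≤ 1 := by nlinarith
  have hw0 : 0 ≤ 1 - (x * (2 - x)) ^ 2 := by nlinarith [sq_nonneg (1-x)]
  have hw1 : 1 - (x * (2 - x)) ^ 2 ≤ 1 := by nlinarith
  induction k with
  | zero =>
      have h1x : (0:ℝ) ≤ 1 - x := by linarith
      have e1 : (2:ℕ) ^ (0 + 2) = 4 := by norm_num
      have e2 : (2:ℕ) ^ 0 = 1 := by norm_num
      rw [e1, e2, pow_one]
      have key : (1 - (1 - (x * (2 - x)) ^ 2)) ^ 2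
            * (2 - (1 - (1 - (x * (2 - x)) ^ 2)) ^ 2)
          - (1 - (1 - x ^ 2) ^ 4) ^ 2 =
          16 * (x^4 * (1-x)^12) + 128 * (x^5 * (1-x)^11) + 448 * (x^6 * (1-x)^10)
            + 944 * (x^7 * (1-x)^9) + 1214 * (x^8 * (1-x)^8) + 944 * (x^9 * (1-x)^7)
            + 448 * (x^10 * (1-x)^6) + 128 * (x^11 * (1-x)^5) + 16 * (x^12 * (1-x)^4) := by
        ring
      have t1 : 0 ≤ x^4 * (1-x)^12 := mul_nonneg (pow_nonneg hx0 4) (pow_nonneg h1x 12)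
      have t2 : 0 ≤ x^5 * (1-x)^11 := mul_nonneg (pow_nonneg hx0 5) (pow_nonneg h1x 11)
      have t3 : 0 ≤ x^6 * (1-x)^10 := mul_nonneg (pow_nonneg hx0 6) (pow_nonneg h1x 10)
      have t4 : 0 ≤ x^7 * (1-x)^9 := mul_nonneg (pow_nonneg hx0 7) (pow_nonneg h1x 9)
      have t5 : 0 ≤ x^8 * (1-x)^8 := mul_nonneg (pow_nonneg hx0 8) (pow_nonneg h1x 8)
      have t6 : 0 ≤ x^9 * (1-x)^7 := mul_nonneg (pow_nonneg hx0 9) (pow_nonneg h1x 7)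
      have t7 : 0 ≤ x^10 * (1-x)^6 := mul_nonneg (pow_nonneg hx0 10) (pow_nonneg h1x 6)
      have t8 : 0 ≤ x^11 * (1-x)^5 := mul_nonneg (pow_nonneg hx0 11) (pow_nonneg h1x 5)
      have t9 : 0 ≤ x^12 * (1-x)^4 := mul_nonneg (pow_nonneg hx0 12) (pow_nonneg h1x 4)
      linarith
  | succ n ih =>
      set p : ℝ := 1 - (1 - x ^ 2) ^ 2 ^ (n + 2) with hp
      set q : ℝ := 1 - (1 - (x * (2 - x)) ^ 2) ^ 2 ^ n with hq
      have hA0 : 0 ≤ (1 - x ^ 2) ^ 2 ^ (n + 2) := pow_nonneg hx2a _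
      have hA1 : (1 - x ^ 2) ^ 2 ^ (n + 2) ≤ 1 := pow_le_one₀ hx2a hx2b
      have hB0 : 0 ≤ (1 - (x * (2 - x)) ^ 2) ^ 2 ^ n := pow_nonneg hw0 _
      have hB1 : (1 - (x * (2 - x)) ^ 2) ^ 2 ^ n ≤ 1 := pow_le_one₀ hw0 hw1
      have hp0 : 0 ≤ p := by rw [hp]; linarith
      have hq0 : 0 ≤ q := by rw [hq]; linarith
      have hq1 : q ≤ 1 := by rw [hq]; linarith
      have hstep := step_lemma p q hp0 hq0 hq1 ih
      have hpnext : 1 - (1 - x ^ 2) ^ 2 ^ (n + 1 + 2) = p * (2 - p) := by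
        rw [hp]
        have hh : (2:ℕ) ^ (n + 1 + 2) = 2 ^ (n + 2) * 2 := by rw [pow_succ]
        rw [hh, pow_mul]
        ring
      have hqnext : 1 - (1 - (x * (2 - x)) ^ 2) ^ 2 ^ (n + 1) = q * (2 - q) := by
        rw [hq]
        have hh : (2:ℕ) ^ (n + 1) = 2 ^ n * 2 := by rw [pow_succ]
        rw [hh, pow_mul]
        ring
      rw [hpnext, hqnext]
      exact hstep

private lemma zpath_L (k : ℕ) (x : ℝ) :
    Zpath ([true, false] ++ List.replicate k false ++ [false, true]) x
      = (1 - (1 - x ^ 2) ^ 2 ^ (k + 2)) ^ 2 := by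
  simp only [Zpath, List.append_assoc, List.cons_append, List.nil_append,
    List.foldl_cons, List.foldl_append, List.foldl_nil]
  rw [zpath_replicate]
  show Zb true (Zb false (1 - (1 - Zb false (Zb true x)) ^ 2 ^ k)) = _
  show Z1 (Z0 (1 - (1 - Z0 (Z1 x)) ^ 2 ^ k)) = _
  simp only [Z0, Z1]
  have h1 : (1 - (1 - (1 - (1 - x ^ 2) ^ 2)) ^ 2 ^ k) = 1 - ((1 - x^2)^2) ^ 2 ^ k := by
    ring_nf
  rw [h1, ← pow_mul]
  have h2 : (1 - (1 - (1 - (1 - x ^ 2) ^ (2 * 2 ^ k))) ^ 2)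
      = 1 - ((1 - x ^ 2) ^ (2 * 2 ^ k)) ^ 2 := by ring_nf
  rw [h2, ← pow_mul]
  have h3 : 2 * 2 ^ k * 2 = 2 ^ (k + 2) := by ring
  rw [h3]

private lemma zpath_R (k : ℕ) (x : ℝ) :
    Zpath ([false, true] ++ List.replicate k false ++ [true, false]) x
      = 1 - (1 - (1 - (1 - (x * (2 - x)) ^ 2) ^ 2 ^ k) ^ 2) ^ 2 := by
  simp only [Zpath, List.append_assoc, List.cons_append, List.nil_append,
    List.foldl_cons, List.foldl_append, List.foldl_nil]
  rw [zpath_replicate]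
  show Zb false (Zb true (1 - (1 - Zb true (Zb false x)) ^ 2 ^ k)) = _
  show Z0 (Z1 (1 - (1 - Z1 (Z0 x)) ^ 2 ^ k)) = _
  simp only [Z0, Z1]
  have h1 : (1 - (1 - (1 - x) ^ 2) ^ 2) = 1 - (x * (2 - x)) ^ 2 := by ring
  rw [h1]

theorem Zpath_010k10_ge_100k01 (k : ℕ) (x : ℝ) (hx : x ∈ Set.Icc (0:ℝ) 1) :
    Zpath ([true, false] ++ List.replicate k false ++ [false, true]) x
      ≤ Zpath ([false, true] ++ List.replicate k false ++ [true, false]) x := by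
  obtain ⟨hx0, hx1⟩ := hx
  rw [zpath_L, zpath_R]
  have hm := main_ineq k x hx0 hx1
  set q : ℝ := 1 - (1 - (x * (2 - x)) ^ 2) ^ 2 ^ k with hqd
  have hgoal : 1 - (1 - q ^ 2) ^ 2 = q ^ 2 * (2 - q ^ 2) := by ring
  rw [hgoal]
  exact hm
end

section
/- For all x in [0,1], Z_{1100}(x) ≥ Z_{0111}(x), i.e. applying Z_1, Z_1, Z_0, Z_0 in order to x gives a value at least as large as applying Z_0, Z_1, Z_1, Z_1 in order. -/
theorem Z_1100_ge_0111 (x : ℝ) (hx : x ∈ Set.Icc (0:ℝ) 1) :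
    Z1 (Z1 (Z1 (Z0 x))) ≤ Z0 (Z0 (Z1 (Z1 x))) := by
  obtain ⟨h0, h1⟩ := hx
  have hy : (0:ℝ) ≤ 1 - x := by linarith
  have key : (1-x)^2*(1+x)^4*(1+x^2)^4 ≤
      (1+(2*x-x^2))*(1+(2*x-x^2)^2)*(1+(2*x-x^2)^4) := by
    nlinarith [mul_nonneg (pow_nonneg h0 4) (pow_nonneg hy 10),
      mul_nonneg (pow_nonneg h0 5) (pow_nonneg hy 9),
      mul_nonneg (pow_nonneg h0 6) (pow_nonneg hy 8),
      mul_nonneg (pow_nonneg h0 7) (pow_nonneg hy 7),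
      mul_nonneg (pow_nonneg h0 8) (pow_nonneg hy 6),
      mul_nonneg (pow_nonneg h0 9) (pow_nonneg hy 5),
      mul_nonneg (pow_nonneg h0 10) (pow_nonneg hy 4),
      mul_nonneg (pow_nonneg h0 11) (pow_nonneg hy 3),
      mul_nonneg (pow_nonneg h0 12) (pow_nonneg hy 2),
      mul_nonneg (pow_nonneg h0 13) (pow_nonneg hy 1),
      pow_nonneg h0 14]
  have h2 : (0:ℝ) ≤ (1-x)^2 := sq_nonneg _
  have h3 := mul_le_mul_of_nonneg_left key h2
  simp only [Z0, Z1]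
  nlinarith [h3]
end

section
/- For all x in [0,1], Z_{1000}(x) ≥ Z_{0011}(x), that is, Z_0(Z_0(Z_0(Z_1(x)))) = 1 - (1 - x^2)^8 ≥ Z_1(Z_1(Z_0(Z_0(x)))) = (1-(1-x)^4)^4. -/
theorem Z_1000_ge_0011 (x : ℝ) (hx : x ∈ Set.Icc (0:ℝ) 1) :
    Z0 (Z0 (Z0 (Z1 x))) = 1 - (1 - x ^ 2) ^ 8 ∧
    Z1 (Z1 (Z0 (Z0 x))) = (1 - (1 - x) ^ 4) ^ 4 ∧
    Z1 (Z1 (Z0 (Z0 x))) ≤ Z0 (Z0 (Z0 (Z1 x))) := by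
  obtain ⟨h0, h1⟩ := hx
  have hy : (0:ℝ) ≤ 1 - x := by linarith
  have t : ∀ k m : ℕ, (0:ℝ) ≤ x ^ k * (1 - x) ^ m := fun k m =>
    mul_nonneg (pow_nonneg h0 k) (pow_nonneg hy m)
  have hq : (0:ℝ) ≤ 8 + 32*x - 204*x^2 + 560*x^3 - 840*x^4 + 752*x^5 - 474*x^6
      + 232*x^7 - 68*x^8 + 8*x^9 - 2*x^10 := by
    nlinarith [t 0 10, t 1 9, t 2 8, t 3 7, t 4 6, t 5 5, t 6 4, t 7 3, t 8 2, t 9 1, t 10 0]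
  refine ⟨by unfold Z0 Z1; ring, by unfold Z0 Z1; ring, ?_⟩
  unfold Z0 Z1
  nlinarith [mul_nonneg (t 2 4) hq]
end

section
/- For naturals k and n with 2^k + k ≤ n, one has (1 - 1/2^(2^k))^(2^(n-k)) ≤ 1/2. -/
theorem numeric_condition_holds (k n : ℕ) (h : 2 ^ k + k ≤ n) :
    ((1 : ℝ) - 1 / 2 ^ (2 ^ k)) ^ (2 ^ (n - k)) ≤ 1 / 2 := by
  set m : ℕ := 2 ^ k with hm
  have hmpos : 1 ≤ m := Nat.one_le_two_pow
  have hNpos : (0:ℝ) < 2 ^ m := by positivity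
  have hbase0 : (0:ℝ) ≤ 1 - 1 / 2 ^ m := by
    have : (1:ℝ) / 2 ^ m ≤ 1 := by
      rw [div_le_one hNpos]; exact one_le_pow₀ (by norm_num)
    linarith
  have hbase1 : (1:ℝ) - 1 / 2 ^ m ≤ 1 := by
    have : (0:ℝ) ≤ 1 / 2 ^ m := by positivity
    linarith
  have hexp : 2 ^ m ≤ 2 ^ (n - k) := by
    apply Nat.pow_le_pow_right (by norm_num)
    omega
  have step1 : ((1:ℝ) - 1 / 2 ^ m) ^ (2 ^ (n - k)) ≤ ((1:ℝ) - 1 / 2 ^ m) ^ (2 ^ m) :=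
    pow_le_pow_of_le_one hbase0 hbase1 hexp
  have step2 : ((1:ℝ) - 1 / 2 ^ m) ^ (2 ^ m) ≤ Real.exp (-(1 / 2 ^ m)) ^ (2 ^ m) := by
    apply pow_le_pow_left₀ hbase0
    have := Real.add_one_le_exp (-(1 / 2 ^ m : ℝ))
    linarith
  have step3 : Real.exp (-(1 / 2 ^ m : ℝ)) ^ (2 ^ m) = Real.exp (-1) := by
    rw [← Real.exp_nat_mul]
    congr 1
    have h2 : ((2:ℝ) ^ m)⁻¹ * 2 ^ m = 1 := inv_mul_cancel₀ (ne_of_gt hNpos)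
    push_cast
    field_simp
  have step4 : Real.exp (-1) ≤ 1 / 2 := by
    rw [Real.exp_neg]
    have h2 : (2:ℝ) ≤ Real.exp 1 := by
      have := Real.add_one_le_exp (1:ℝ); linarith
    rw [inv_le_comm₀ (by positivity) (by norm_num)]
    linarith
  calc ((1:ℝ) - 1 / 2 ^ m) ^ (2 ^ (n - k)) ≤ _ := step1
    _ ≤ _ := step2
    _ = Real.exp (-1) := step3
    _ ≤ 1 / 2 := step4
end

section
/- Abstract channel bound propagation for Z: Let Z : BMSChannel → [0,1] satisfy Z(W^1) = Z(W)^2 and Z(W)·sqrt(2 - Z(W)^2) ≤ Z(W^0) ≤ 1-(1-Z(W))^2 for all channels W. Then for any binary string α of length n, Z_1^{-1}(Z_α(Z_1(x))) ≤ Z(W^α) ≤ Z_α(x) where x = Z(W); i.e. sqrt(Z_α(x^2)) ≤ Z(W^α) ≤ Z_α(x). -/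
/-- `chpath up down α W` applies the polarization transforms (false = up, true = down)
along `α`, first letter first. -/
def chpath {C : Type*} (up down : C → C) (α : List Bool) (W : C) : C :=
  α.foldl (fun V b => if b then down V else up V) W

lemma Zpath_facts : ∀ (α : List Bool) (x y : ℝ), 0 ≤ x → x ≤ y → y ≤ 1 →
    Zpath α x ≤ Zpath α y ∧ 0 ≤ Zpath α x ∧ Zpath α y ≤ 1 := by
  intro α
  induction α with
  | nil => intro x y hx hxy hy; exact ⟨hxy, hx, hy⟩
  | cons b α ih =>
    intro x y hx hxy hy
    have h1 : Zb b x ≤ Zb b y := by cases b <;> simp only [Zb, Z0, Z1] <;> nlinarith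
    have h2 : 0 ≤ Zb b x := by cases b <;> simp only [Zb, Z0, Z1] <;> nlinarith
    have h3 : Zb b y ≤ 1 := by cases b <;> simp only [Zb, Z0, Z1] <;> nlinarith
    have := ih (Zb b x) (Zb b y) h2 h1 h3
    simpa [Zpath] using this

theorem Z_general_bounds {C : Type*} (up down : C → C) (Z : C → ℝ)
    (hZmem : ∀ W, Z W ∈ Set.Icc (0:ℝ) 1)
    (hdown : ∀ W, Z (down W) = (Z W) ^ 2)
    (hup_lo : ∀ W, Z W * Real.sqrt (2 - (Z W) ^ 2) ≤ Z (up W))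
    (hup_hi : ∀ W, Z (up W) ≤ 1 - (1 - Z W) ^ 2)
    (α : List Bool) (W : C) :
    Real.sqrt (Zpath α ((Z W) ^ 2)) ≤ Z (chpath up down α W) ∧
    Z (chpath up down α W) ≤ Zpath α (Z W) := by
  induction α generalizing W with
  | nil =>
    obtain ⟨h0, h1⟩ := hZmem W
    constructor
    · simpa [Zpath, chpath] using (Real.sqrt_sq h0).le
    · simp [Zpath, chpath]
  | cons b α ih =>
    obtain ⟨hx0, hx1⟩ := hZmem W
    cases b with
    | true =>
      have hc : chpath up down (true :: α) W = chpath up down α (down W) := rfl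
      have hd : Z (down W) = (Z W) ^ 2 := hdown W
      obtain ⟨ihl, ihr⟩ := ih (down W)
      rw [hd] at ihl ihr
      have hZp : ∀ z : ℝ, Zpath (true :: α) z = Zpath α (z ^ 2) := fun z => rfl
      rw [hc, hZp, hZp]
      exact ⟨ihl, ihr⟩
    | false =>
      have hc : chpath up down (false :: α) W = chpath up down α (up W) := rfl
      obtain ⟨hy0, hy1⟩ := hZmem (up W)
      have hlo := hup_lo W
      have hhi : Z (up W) ≤ Z0 (Z W) := hup_hi W
      have hs : Real.sqrt (2 - (Z W) ^ 2) ^ 2 = 2 - (Z W) ^ 2 :=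
        Real.sq_sqrt (by nlinarith)
      have hnn : 0 ≤ Z W * Real.sqrt (2 - (Z W) ^ 2) :=
        mul_nonneg hx0 (Real.sqrt_nonneg _)
      have key1 : Z0 ((Z W) ^ 2) ≤ (Z (up W)) ^ 2 := by
        have h := pow_le_pow_left₀ hnn hlo 2
        simp only [Z0]
        nlinarith
      have key1nn : 0 ≤ Z0 ((Z W) ^ 2) := by simp only [Z0]; nlinarith
      have hy2 : (Z (up W)) ^ 2 ≤ 1 := by nlinarith
      have hZb1 : Z0 (Z W) ≤ 1 := by simp only [Z0]; nlinarith
      obtain ⟨ihl, ihr⟩ := ih (up W)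
      have m1 := (Zpath_facts α _ _ key1nn key1 hy2).1
      have m2 := (Zpath_facts α _ _ hy0 hhi hZb1).1
      have hZp : ∀ z : ℝ, Zpath (false :: α) z = Zpath α (Z0 z) := fun z => rfl
      rw [hc, hZp, hZp]
      exact ⟨le_trans (Real.sqrt_le_sqrt m1) ihl, le_trans ihr m2⟩
end

section
/- Under the abstract channel axioms, if Z_{1α}(x) ≤ Z_{1γ}(x) for all x in [0,1] (i.e. γ ⪯_BEC α), then for every channel W, Z(W^{1α}) ≤ Z(W^{γ1}), i.e. γ1 ⪯_Z 1α. -/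
lemma Zb_mem (b : Bool) {x : ℝ} (hx : x ∈ Set.Icc (0:ℝ) 1) :
    Zb b x ∈ Set.Icc (0:ℝ) 1 := by
  obtain ⟨h0, h1⟩ := hx
  cases b <;> simp only [Zb, Z0, Z1] <;> constructor <;> nlinarith

lemma Zb_mono (b : Bool) {x y : ℝ} (hx : x ∈ Set.Icc (0:ℝ) 1)
    (hy : y ∈ Set.Icc (0:ℝ) 1) (hxy : x ≤ y) : Zb b x ≤ Zb b y := by
  obtain ⟨h0, h1⟩ := hx
  obtain ⟨g0, g1⟩ := hy
  cases b <;> simp only [Zb, Z0, Z1] <;> nlinarith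

lemma Zpath_cons (b : Bool) (α : List Bool) (x : ℝ) :
    Zpath (b :: α) x = Zpath α (Zb b x) := rfl

lemma chpath_cons {C : Type*} (up down : C → C) (b : Bool) (α : List Bool) (W : C) :
    chpath up down (b :: α) W = chpath up down α (if b then down W else up W) := rfl

lemma Zpath_mem (α : List Bool) : ∀ x ∈ Set.Icc (0:ℝ) 1, Zpath α x ∈ Set.Icc (0:ℝ) 1 := by
  induction α with
  | nil => intro x hx; exact hx
  | cons b α ih =>
      intro x hx
      rw [Zpath_cons]
      exact ih _ (Zb_mem b hx)

lemma Zpath_mono (α : List Bool) : ∀ x ∈ Set.Icc (0:ℝ) 1, ∀ y ∈ Set.Icc (0:ℝ) 1,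
    x ≤ y → Zpath α x ≤ Zpath α y := by
  induction α with
  | nil => intro x _ y _ h; exact h
  | cons b α ih =>
      intro x hx y hy h
      rw [Zpath_cons, Zpath_cons]
      exact ih _ (Zb_mem b hx) _ (Zb_mem b hy) (Zb_mono b hx hy h)

lemma Z_upper {C : Type*} (up down : C → C) (Z : C → ℝ)
    (hZmem : ∀ W, Z W ∈ Set.Icc (0:ℝ) 1)
    (hdown : ∀ W, Z (down W) = (Z W) ^ 2)
    (hup_hi : ∀ W, Z (up W) ≤ 1 - (1 - Z W) ^ 2)
    (α : List Bool) : ∀ W : C, Z (chpath up down α W) ≤ Zpath α (Z W) := by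
  induction α with
  | nil => intro W; exact le_refl _
  | cons b α ih =>
      intro W
      rw [chpath_cons, Zpath_cons]
      refine le_trans (ih _) (Zpath_mono α _ (hZmem _) _ (Zb_mem b (hZmem W)) ?_)
      cases b
      · simpa [Zb, Z0] using hup_hi W
      · simp [Zb, Z1, hdown W]

lemma Z_lower {C : Type*} (up down : C → C) (Z : C → ℝ)
    (hZmem : ∀ W, Z W ∈ Set.Icc (0:ℝ) 1)
    (hdown : ∀ W, Z (down W) = (Z W) ^ 2)
    (hup_lo : ∀ W, Z W * Real.sqrt (2 - (Z W) ^ 2) ≤ Z (up W))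
    (α : List Bool) : ∀ W : C, Zpath α ((Z W) ^ 2) ≤ (Z (chpath up down α W)) ^ 2 := by
  induction α with
  | nil => intro W; exact le_refl _
  | cons b α ih =>
      intro W
      rw [chpath_cons, Zpath_cons]
      have hsq : ∀ V : C, (Z V) ^ 2 ∈ Set.Icc (0:ℝ) 1 := by
        intro V
        obtain ⟨h0, h1⟩ := hZmem V
        constructor <;> nlinarith
      refine le_trans (Zpath_mono α _ (Zb_mem b (hsq W)) _ (hsq _) ?_) (ih _)
      cases b
      · -- up case: Zb false (x^2) = 1 - (1-x^2)^2 = x^2 (2 - x^2) ≤ Z(up W)^2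
        obtain ⟨h0, h1⟩ := hZmem W
        have hlo := hup_lo W
        have hnn : (0:ℝ) ≤ 2 - (Z W) ^ 2 := by nlinarith
        have hs : (Z W * Real.sqrt (2 - (Z W) ^ 2)) ^ 2 = (Z W) ^ 2 * (2 - (Z W) ^ 2) := by
          rw [mul_pow, Real.sq_sqrt hnn]
        have hnn2 : 0 ≤ Z W * Real.sqrt (2 - (Z W) ^ 2) :=
          mul_nonneg h0 (Real.sqrt_nonneg _)
        have h2 : (Z W) ^ 2 * (2 - (Z W) ^ 2) ≤ (Z (up W)) ^ 2 := by
          rw [← hs]; exact pow_le_pow_left₀ hnn2 hlo 2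
        show Z0 ((Z W) ^ 2) ≤ (Z (up W)) ^ 2
        simp only [Z0]
        nlinarith
      · -- down case: Zb true (x^2) = x^4 = (Z (down W))^2
        show Z1 ((Z W) ^ 2) ≤ (Z (down W)) ^ 2
        simp only [Z1, hdown W]
        exact le_refl _

theorem gamma1_preceqZ_one_alpha {C : Type*} (up down : C → C) (Z : C → ℝ)
    (hZmem : ∀ W, Z W ∈ Set.Icc (0:ℝ) 1)
    (hdown : ∀ W, Z (down W) = (Z W) ^ 2)
    (hup_lo : ∀ W, Z W * Real.sqrt (2 - (Z W) ^ 2) ≤ Z (up W))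
    (hup_hi : ∀ W, Z (up W) ≤ 1 - (1 - Z W) ^ 2)
    (α γ : List Bool)
    (hBEC : ∀ x ∈ Set.Icc (0:ℝ) 1, Zpath (true :: α) x ≤ Zpath (true :: γ) x) :
    ∀ W : C, Z (chpath up down (true :: α) W) ≤ Z (chpath up down (γ ++ [true]) W) := by
  intro W
  have h1 : Z (chpath up down (true :: α) W) ≤ Zpath (true :: α) (Z W) := by
    rw [chpath_cons, Zpath_cons]
    simp only [if_true, Zb, Z1]
    have := Z_upper up down Z hZmem hdown hup_hi α (down W)
    rwa [hdown W] at this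
  have h2 : Zpath (true :: α) (Z W) ≤ Zpath (true :: γ) (Z W) := hBEC _ (hZmem W)
  have h3 : Zpath (true :: γ) (Z W) ≤ Z (chpath up down (γ ++ [true]) W) := by
    rw [Zpath_cons]
    simp only [Zb, Z1]
    have hfold : chpath up down (γ ++ [true]) W = down (chpath up down γ W) := by
      simp [chpath, List.foldl_append]
    rw [hfold, hdown]
    exact Z_lower up down Z hZmem hdown hup_lo γ W
  linarith
end
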